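/- Let Z ⊆ ℝ^d be a zonotope with generator set 𝒢 all of whose extreme points lie in {0,1/2,1}^d, and let 𝒜 ⊆ 𝒢 be minimally linearly dependent, i.e., 𝒜 is linearly dependent over ℝ but every proper subset of 𝒜 is linearly independent. Then there exists a family (λ_g)_{g∈𝒜} with each λ_g ∈ {1,−1} such that Σ_{g∈𝒜} λ_g g = 0. -/

import Mathlib

/-! Every generator `g` is an edge of the zonotope: perturbing a functional that vanishes on `g`
but on no other generator by `± ε` times one positive on `g` yields two vertices `v` and `v + g`,
so half-integrality makes each coordinate of `g` either `0` or of absolute value at least `1/2`.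
By Krein–Milman the zonotope lies in the unit cube, and the vertices maximising and minimising the
`i`-th coordinate differ by `∑ g, |g i|`, which is therefore at most `1`. So in a dependency
`∑ c g • g = 0` over `𝒜` (all `c g ≠ 0` by minimality) each coordinate involves at most two
generators, with entries of equal absolute value, and the signs `sign (c g)` satisfy the same
equations. -/

open Set Pointwise

noncomputable section

/-- `Z` is a zonotope with generator set `G`: `Z = t + Σ_{g ∈ G} conv{0,g}` for some
translation `t`, where the generators are nonzero and pairwise non-collinear. -/
def IsZonotopeWithGenerators {d : ℕ} (Z : Set (Fin d → ℝ)) (G : Finset (Fin d → ℝ)) : Prop :=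
  (∀ g ∈ G, g ≠ 0) ∧
  (∀ g ∈ G, ∀ h ∈ G, g ≠ h → ∀ r : ℝ, g ≠ r • h) ∧
  ∃ t : Fin d → ℝ,
    Z = {x | ∃ c : (Fin d → ℝ) → ℝ, (∀ g, 0 ≤ c g ∧ c g ≤ 1) ∧ x = t + ∑ g ∈ G, c g • g}

/-- A set is half-integral when all of its extreme points have coordinates in `{0,1/2,1}`. -/
def IsHalfIntegral {d : ℕ} (P : Set (Fin d → ℝ)) : Prop :=
  ∀ x ∈ Set.extremePoints ℝ P, ∀ i, x i = 0 ∨ x i = 1/2 ∨ x i = 1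

/-- A finite set of vectors is minimally linearly dependent when it is linearly dependent
but every proper subset of it is linearly independent. -/
def MinLinDep {d : ℕ} (A : Finset (Fin d → ℝ)) : Prop :=
  ¬ LinearIndependent ℝ (fun x : (A : Set (Fin d → ℝ)) => x.val) ∧
  ∀ B : Finset (Fin d → ℝ), B ⊂ A →
    LinearIndependent ℝ (fun x : (B : Set (Fin d → ℝ)) => x.val)

open Module Filter Topology

section Zonotope

variable {E : Type*} [AddCommGroup E] [Module ℝ E]

def zonotope (t : E) (G : Finset E) : Set E :=
  {x | ∃ c : E → ℝ, (∀ g, 0 ≤ c g ∧ c g ≤ 1) ∧ x = t + ∑ g ∈ G, c g • g}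

/-- The vertex of `zonotope t G` at which the functional `f` is maximal. -/
def zonotopeVertex (t : E) (G : Finset E) (f : Dual ℝ E) : E :=
  t + ∑ g ∈ G with 0 < f g, g

lemma zonotope_eq_image (t : E) (G : Finset E) :
    zonotope t G = (fun c : E → ℝ => t + ∑ g ∈ G, c g • g) '' Set.Icc 0 1 := by
  ext x
  simp only [zonotope, Set.mem_image, Set.mem_Icc, Pi.le_def, Pi.zero_apply,
    Pi.one_apply, ← forall_and, eq_comm]
  rfl

lemma convex_zonotope (t : E) (G : Finset E) : Convex ℝ (zonotope t G) := by
  have hL : (fun c : E → ℝ => t + ∑ g ∈ G, c g • g) =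
      (fun x => t + x) ∘ ⇑(∑ g ∈ G, (LinearMap.proj g : (E → ℝ) →ₗ[ℝ] ℝ).smulRight g) := by
    ext c; simp
  rw [zonotope_eq_image, hL, Set.image_comp]
  exact ((convex_Icc (𝕜 := ℝ) (0 : E → ℝ) 1).linear_image _).translate t

lemma isCompact_zonotope [TopologicalSpace E] [ContinuousAdd E] [ContinuousSMul ℝ E]
    (t : E) (G : Finset E) : IsCompact (zonotope t G) := by
  rw [zonotope_eq_image]
  exact isCompact_Icc.image (by fun_prop)

lemma zonotopeVertex_mem_zonotope (t : E) (G : Finset E) (f : Dual ℝ E) :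
    zonotopeVertex t G f ∈ zonotope t G :=
  ⟨fun g => if 0 < f g then 1 else 0, fun g => by dsimp only; split_ifs <;> norm_num,
    by simp [zonotopeVertex, Finset.sum_filter, ite_smul]⟩

lemma apply_zonotopeVertex (t : E) (G : Finset E) (f : Dual ℝ E) :
    f (zonotopeVertex t G f) = f t + ∑ g ∈ G, (f g)⁺ := by
  rw [zonotopeVertex, map_add, map_sum, Finset.sum_filter]
  refine congrArg _ (Finset.sum_congr rfl fun g _ => ?_)
  split_ifs with h
  · exact (posPart_eq_self.2 h.le).symm
  · exact (posPart_eq_zero.2 (not_lt.1 h)).symm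

lemma exists_dual_apply_eq_zero_forall_apply_ne_zero {K V : Type*} [Field K] [Infinite K]
    [AddCommGroup V] [Module K V] {g : V} (S : Finset V) (hS : ∀ h ∈ S, h ∉ K ∙ g) :
    ∃ f : Dual K V, f g = 0 ∧ ∀ h ∈ S, f h ≠ 0 := by
  obtain ⟨f, hf⟩ := exists_dual_forall_apply_ne_zero (K := K) (fun h : S => (K ∙ g).mkQ h)
    fun h => by simpa [Submodule.Quotient.mk_eq_zero] using hS h h.2
  refine ⟨f ∘ₗ (K ∙ g).mkQ, ?_, fun h hh => hf ⟨h, hh⟩⟩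
  simp [(Submodule.Quotient.mk_eq_zero _).2 (Submodule.mem_span_singleton_self g)]

lemma mul_le_posPart {c a : ℝ} (h₀ : 0 ≤ c) (h₁ : c ≤ 1) : c * a ≤ a⁺ := by
  rcases le_total 0 a with ha | ha
  · rw [posPart_eq_self.2 ha]; nlinarith
  · rw [posPart_eq_zero.2 ha]; nlinarith

lemma apply_le_apply_zonotopeVertex {t x : E} {G : Finset E} (f : Dual ℝ E)
    (hx : x ∈ zonotope t G) : f x ≤ f (zonotopeVertex t G f) := by
  obtain ⟨c, hc, rfl⟩ := hx
  rw [apply_zonotopeVertex]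
  simp only [map_add, map_sum, map_smul, smul_eq_mul]
  gcongr with g
  exact mul_le_posPart (hc g).1 (hc g).2

lemma eq_zonotopeVertex_of_apply_le {t x : E} {G : Finset E} {f : Dual ℝ E}
    (hf : ∀ g ∈ G, f g ≠ 0) (hx : x ∈ zonotope t G) (h : f (zonotopeVertex t G f) ≤ f x) :
    x = zonotopeVertex t G f := by
  obtain ⟨c, hc, rfl⟩ := hx
  have hle : ∀ g ∈ G, c g * f g ≤ (f g)⁺ := fun g _ => mul_le_posPart (hc g).1 (hc g).2
  have heq : ∀ g ∈ G, c g * f g = (f g)⁺ := by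
    refine (Finset.sum_eq_sum_iff_of_le hle).1 (le_antisymm (Finset.sum_le_sum hle) ?_)
    simpa [apply_zonotopeVertex] using h
  rw [zonotopeVertex, Finset.sum_filter]
  refine congrArg _ (Finset.sum_congr rfl fun g hg => ?_)
  split_ifs with hpos
  · have hcg := heq g hg
    rw [posPart_eq_self.2 hpos.le, mul_eq_right₀ (hf g hg)] at hcg
    rw [hcg, one_smul]
  · have hcg := heq g hg
    rw [posPart_eq_zero.2 (not_lt.1 hpos), mul_eq_zero, or_iff_left (hf g hg)] at hcg
    rw [hcg, zero_smul]

lemma mem_extremePoints_of_forall_apply_lt {A : Set E} {x : E} (f : Dual ℝ E) (hx : x ∈ A)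
    (h : ∀ y ∈ A, y ≠ x → f y < f x) : x ∈ A.extremePoints ℝ := by
  have hle : ∀ y ∈ A, f y ≤ f x := fun y hy =>
    (eq_or_ne y x).elim (fun hyx => hyx ▸ le_rfl) fun hyx => (h y hy hyx).le
  refine ⟨hx, fun x₁ hx₁ x₂ hx₂ ⟨a, b, ha, hb, hab, hx'⟩ => ?_⟩
  have hfx : a * f x₁ + b * f x₂ = f x := by rw [← hx']; simp
  by_contra hne
  have h₁ := mul_lt_mul_of_pos_left (h x₁ hx₁ hne) ha
  have h₂ := mul_le_mul_of_nonneg_left (hle x₂ hx₂) hb.le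
  have : (a + b) * f x = f x := by rw [hab, one_mul]
  linarith

lemma zonotopeVertex_mem_extremePoints (t : E) {G : Finset E} {f : Dual ℝ E}
    (hf : ∀ g ∈ G, f g ≠ 0) : zonotopeVertex t G f ∈ (zonotope t G).extremePoints ℝ :=
  mem_extremePoints_of_forall_apply_lt f (zonotopeVertex_mem_zonotope t G f) fun _y hy hne =>
    (apply_le_apply_zonotopeVertex f hy).lt_of_not_ge fun h =>
      hne (eq_zonotopeVertex_of_apply_le hf hy h)

lemma sum_abs_le_of_forall_mem_zonotope {t : E} {G : Finset E} (f : Dual ℝ E) {a b : ℝ}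
    (h : ∀ x ∈ zonotope t G, a ≤ f x ∧ f x ≤ b) : ∑ g ∈ G, |f g| ≤ b - a := by
  have hmax := (h _ (zonotopeVertex_mem_zonotope t G f)).2
  have hmin := (h _ (zonotopeVertex_mem_zonotope t G (-f))).1
  have hneg := apply_zonotopeVertex t G (-f)
  rw [apply_zonotopeVertex] at hmax
  simp only [LinearMap.neg_apply, posPart_neg] at hneg
  simp only [← posPart_add_negPart, Finset.sum_add_distrib]
  linarith

lemma zonotopeVertex_eq_of_mem [DecidableEq E] {t g : E} {G : Finset E} (hg : g ∈ G)
    {f u : Dual ℝ E}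
    (hfu : ∀ h ∈ G.erase g, 0 < u h * f h) :
    zonotopeVertex t G u = zonotopeVertex t (G.erase g) f + if 0 < u g then g else 0 := by
  simp only [zonotopeVertex, Finset.sum_filter, ← Finset.add_sum_erase G _ hg]
  rw [Finset.sum_congr rfl fun h hh => if_congr (pos_iff_pos_of_mul_pos (hfu h hh)) rfl rfl]
  abel

theorem exists_mem_extremePoints_add_mem_extremePoints (t : E) {G : Finset E} {g : E}
    (hgG : g ∈ G) (hg : g ≠ 0) (hG : ∀ h ∈ G, h ≠ g → h ∉ ℝ ∙ g) :
    ∃ v ∈ (zonotope t G).extremePoints ℝ, v + g ∈ (zonotope t G).extremePoints ℝ := by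
  classical
  obtain ⟨f, hfg, hf⟩ := exists_dual_apply_eq_zero_forall_apply_ne_zero (G.erase g)
    fun h hh => hG h (Finset.mem_of_mem_erase hh) (Finset.ne_of_mem_erase hh)
  obtain ⟨φ, hφ⟩ : ∃ φ : Dual ℝ E, φ g = 1 := by
    obtain ⟨φ, hφ⟩ := Projective.exists_dual_ne_zero ℝ hg
    exact ⟨(φ g)⁻¹ • φ, by simp [hφ]⟩
  set u : ℝ → Dual ℝ E := fun r => f + r • φ
  have hug (r : ℝ) : u r g = r := by simp [u, hfg, hφ]
  have hsmall : ∀ᶠ r in 𝓝 (0 : ℝ), ∀ h ∈ G.erase g, 0 < u r h * f h := by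
    rw [eventually_all_finset]
    intro h hh
    have hcont : Continuous fun r : ℝ => u r h * f h := by
      simp only [u, LinearMap.add_apply, LinearMap.smul_apply, smul_eq_mul]; fun_prop
    exact hcont.tendsto' 0 _ (by simp [u]) |>.eventually_const_lt (mul_self_pos.2 (hf h hh))
  have hvertex (r : ℝ) (hr : r ≠ 0) (hsign : ∀ h ∈ G.erase g, 0 < u r h * f h) :
      zonotopeVertex t G (u r) ∈ (zonotope t G).extremePoints ℝ := by
    refine zonotopeVertex_mem_extremePoints t fun h hh => ?_
    obtain rfl | hne := eq_or_ne h g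
    · rwa [hug]
    · exact left_ne_zero_of_mul (hsign h (Finset.mem_erase.2 ⟨hne, hh⟩)).ne'
  obtain ⟨r₁, hr₁, hr₁pos⟩ := ((hsmall.filter_mono nhdsWithin_le_nhds).and
    (self_mem_nhdsWithin (s := Set.Ioi 0))).exists
  obtain ⟨r₂, hr₂, hr₂neg⟩ := ((hsmall.filter_mono nhdsWithin_le_nhds).and
    (self_mem_nhdsWithin (s := Set.Iio 0))).exists
  refine ⟨_, hvertex r₂ (ne_of_lt hr₂neg) hr₂, ?_⟩
  convert hvertex r₁ (ne_of_gt hr₁pos) hr₁ using 1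
  rw [zonotopeVertex_eq_of_mem hgG hr₁, zonotopeVertex_eq_of_mem hgG hr₂, hug, hug,
    if_pos hr₁pos, if_neg hr₂neg.not_gt, add_zero]

end Zonotope

lemma IsCompact.subset_of_extremePoints_subset {E : Type*} [AddCommGroup E] [Module ℝ E]
    [TopologicalSpace E] [T2Space E] [IsTopologicalAddGroup E] [ContinuousSMul ℝ E]
    [LocallyConvexSpace ℝ E] {s C : Set E} (hs : IsCompact s) (hsc : Convex ℝ s) (hC : IsClosed C)
    (hCc : Convex ℝ C) (h : s.extremePoints ℝ ⊆ C) : s ⊆ C := by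
  rw [← closure_convexHull_extremePoints hs hsc]
  exact closure_minimal (convexHull_min h hCc) hC

lemma IsHalfIntegral.subset_Icc {d : ℕ} {P : Set (Fin d → ℝ)} (hP : IsHalfIntegral P)
    (hc : IsCompact P) (hcv : Convex ℝ P) : P ⊆ Set.Icc 0 1 := by
  refine hc.subset_of_extremePoints_subset hcv isClosed_Icc (convex_Icc 0 1) fun x hx =>
    ⟨fun i => ?_, fun i => ?_⟩ <;> rcases hP x hx i with h | h | h <;> norm_num [h]

lemma MinLinDep.exists_sum_smul_eq_zero {d : ℕ} {A : Finset (Fin d → ℝ)} (hA : MinLinDep A) :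
    ∃ c : (Fin d → ℝ) → ℝ, ∑ g ∈ A, c g • g = 0 ∧ ∀ g ∈ A, c g ≠ 0 := by
  classical
  obtain ⟨c, hc, g₀, hg₀, hcg₀⟩ := not_linearIndepOn_finset_iff (v := id).1 hA.1
  refine ⟨c, hc, fun g hg hcg => hcg₀ ?_⟩
  have hind : LinearIndepOn ℝ id (A.erase g : Set (Fin d → ℝ)) := hA.2 _ (Finset.erase_ssubset hg)
  have hzero := linearIndepOn_finset_iff.1 hind c (by rwa [Finset.sum_erase _ (by simp [hcg])])
  obtain rfl | hne := eq_or_ne g₀ g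
  · exact hcg
  · exact hzero g₀ (Finset.mem_erase.2 ⟨hne, hg₀⟩)

namespace IsZonotopeWithGenerators

variable {d : ℕ} {Z : Set (Fin d → ℝ)} {G : Finset (Fin d → ℝ)}

lemma sum_abs_apply_le_one (hZ : IsZonotopeWithGenerators Z G) (hHI : IsHalfIntegral Z)
    (i : Fin d) : ∑ g ∈ G, |g i| ≤ 1 := by
  obtain ⟨-, -, t, rfl⟩ := hZ
  have hcube := hHI.subset_Icc (isCompact_zonotope t G) (convex_zonotope t G)
  simpa using sum_abs_le_of_forall_mem_zonotope (LinearMap.proj i) fun x hx =>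
    ⟨(hcube hx).1 i, (hcube hx).2 i⟩

lemma apply_eq_zero_or_half_le_abs (hZ : IsZonotopeWithGenerators Z G) (hHI : IsHalfIntegral Z)
    {g : Fin d → ℝ} (hg : g ∈ G) (i : Fin d) : g i = 0 ∨ 1 / 2 ≤ |g i| := by
  obtain ⟨hne, hncol, t, rfl⟩ := hZ
  obtain ⟨v, hv, hvg⟩ := exists_mem_extremePoints_add_mem_extremePoints t hg (hne g hg)
    fun h hh hhg hspan => by
      obtain ⟨r, hr⟩ := Submodule.mem_span_singleton.1 hspan
      exact hncol h hh g hg hhg r hr.symm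
  have hgi : g i = (v + g) i - v i := by simp
  rcases hHI _ hvg i with h₁ | h₁ | h₁ <;> rcases hHI _ hv i with h₂ | h₂ | h₂ <;>
    norm_num [hgi, h₁, h₂, abs_of_nonneg, abs_of_nonpos]

end IsZonotopeWithGenerators

lemma sum_sign_mul_eq_zero {ι : Type*} {s : Finset ι} {c x : ι → ℝ}
    (hx : ∀ j ∈ s, x j = 0 ∨ 1 / 2 ≤ |x j|) (hs : ∑ j ∈ s, |x j| ≤ 1)
    (hc : ∑ j ∈ s, c j * x j = 0) : ∑ j ∈ s, Real.sign (c j) * x j = 0 := by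
  classical
  set T := s.filter fun j => x j ≠ 0
  have hsum_filter (f : ι → ℝ) : ∑ j ∈ T, f j * x j = ∑ j ∈ s, f j * x j :=
    Finset.sum_filter_of_ne fun _ _ h => right_ne_zero_of_mul h
  have hhalf : ∀ j ∈ T, 1 / 2 ≤ |x j| := fun j hj =>
    (hx j (Finset.mem_filter.1 hj).1).resolve_left (Finset.mem_filter.1 hj).2
  have hT : ∑ j ∈ T, |x j| ≤ 1 := (Finset.sum_le_sum_of_subset_of_nonneg
    (Finset.filter_subset _ _) fun _ _ _ => abs_nonneg _).trans hs
  have hcard : T.card ≤ 2 := by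
    have := Finset.card_nsmul_le_sum T _ _ hhalf
    rw [nsmul_eq_mul] at this
    exact_mod_cast (by linarith : (T.card : ℝ) ≤ 2)
  rw [← hsum_filter] at hc ⊢
  obtain h | h | h : T.card = 0 ∨ T.card = 1 ∨ T.card = 2 := by omega
  · simp [Finset.card_eq_zero.1 h]
  · obtain ⟨j, hj⟩ := Finset.card_eq_one.1 h
    have hxj : x j ≠ 0 := (Finset.mem_filter.1 (show j ∈ T by simp [hj])).2
    rw [hj, Finset.sum_singleton, mul_eq_zero, or_iff_left hxj] at hc
    simp [hj, hc]
  · obtain ⟨j, k, hjk, hj⟩ := Finset.card_eq_two.1 h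
    have hxj := hhalf j (by simp [hj])
    have hxk := hhalf k (by simp [hj])
    rw [hj, Finset.sum_pair hjk] at hc hT ⊢
    have hxk₀ : x k ≠ 0 := abs_pos.1 (by linarith)
    rcases abs_eq_abs.1 (by linarith : |x j| = |x k|) with hx' | hx'
    · have : c j = -c k := by
        rw [hx', ← add_mul, mul_eq_zero, or_iff_left hxk₀] at hc
        linarith
      rw [hx', this, Real.sign_neg]
      ring
    · have : c j = c k := by
        rw [hx', mul_neg, neg_add_eq_sub, ← sub_mul, mul_eq_zero, or_iff_left hxk₀] at hc
        linarith
      rw [hx', this]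
      ring

/-- If `𝒜` is a minimally linearly dependent subset of the generators of a half-integral
zonotope, then there are signs `λ_g ∈ {1,-1}` with `Σ_{g ∈ 𝒜} λ_g g = 0`. -/
theorem halfIntegral_zonotope_minLinDep_signs {d : ℕ} (Z : Set (Fin d → ℝ))
    (G A : Finset (Fin d → ℝ)) (hZ : IsZonotopeWithGenerators Z G)
    (hHI : IsHalfIntegral Z) (hAG : A ⊆ G) (hA : MinLinDep A) :
    ∃ lam : (Fin d → ℝ) → ℝ, (∀ g ∈ A, lam g = 1 ∨ lam g = -1) ∧
      ∑ g ∈ A, lam g • g = 0 := by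
  obtain ⟨c, hc, hc₀⟩ := hA.exists_sum_smul_eq_zero
  refine ⟨fun g => Real.sign (c g), fun g hg => (Real.sign_apply_eq_of_ne_zero _ (hc₀ g hg)).symm,
    funext fun i => ?_⟩
  simp only [Finset.sum_apply, Pi.smul_apply, smul_eq_mul, Pi.zero_apply]
  refine sum_sign_mul_eq_zero (fun g hg => hZ.apply_eq_zero_or_half_le_abs hHI (hAG hg) i)
    ((Finset.sum_le_sum_of_subset_of_nonneg hAG fun _ _ _ => abs_nonneg _).trans
      (hZ.sum_abs_apply_le_one hHI i)) ?_
  simpa using congr_fun hc i
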